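/- arXiv:math/0503529 — 8 statements merged into one kernel-verified Lean document; each statement's English description precedes it below -/
import Mathlib

section
/- Let A be an n×n real matrix (n ≥ 2) that is conditionally negative definite, i.e., yᵀAy < 0 for all nonzero y ∈ ℝⁿ with 1ᵀy = 0, where 1 is the all-ones vector. Let Ā = (A + Aᵀ)/2 and define D = Ā - (1/n)Ā11ᵀ - (1/n)11ᵀĀ + (1ᵀA1/n²)11ᵀ. Then the maximum of xᵀAx/xᵀx over nonzero x with 1ᵀx = 0 equals the second largest eigenvalue λ₂ of D, and λ₂ < 0. -/
open Matrix

private lemma dpSumLeft {n : ℕ} {α : Type*} (s : Finset α) (f : α → (Fin n → ℝ))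
    (y : Fin n → ℝ) : (∑ i ∈ s, f i) ⬝ᵥ y = ∑ i ∈ s, f i ⬝ᵥ y := by
  simp only [dotProduct, Finset.sum_apply, Finset.sum_mul]
  exact Finset.sum_comm

private lemma dpSumRight {n : ℕ} {α : Type*} (s : Finset α) (y : Fin n → ℝ)
    (f : α → (Fin n → ℝ)) : y ⬝ᵥ (∑ i ∈ s, f i) = ∑ i ∈ s, y ⬝ᵥ f i := by
  simp only [dotProduct, Finset.sum_apply, Finset.mul_sum]
  exact Finset.sum_comm

private lemma mvSum {n : ℕ} {α : Type*} (s : Finset α) (M : Matrix (Fin n) (Fin n) ℝ)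
    (f : α → (Fin n → ℝ)) : M *ᵥ (∑ i ∈ s, f i) = ∑ i ∈ s, M *ᵥ f i := by
  funext k
  simp only [Matrix.mulVec, dotProduct, Finset.sum_apply, Finset.mul_sum]
  exact Finset.sum_comm

theorem stmt_0 {n : ℕ} (hn : 2 ≤ n) (A : Matrix (Fin n) (Fin n) ℝ)
    (hA : ∀ y : Fin n → ℝ, y ≠ 0 → ∑ j, y j = 0 → y ⬝ᵥ A.mulVec y < 0)
    (D : Matrix (Fin n) (Fin n) ℝ)
    (hDdef : D = (1/2 : ℝ) • (A + Aᵀ)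
        - ((1 : ℝ)/n) • ((1/2 : ℝ) • (A + Aᵀ) * Matrix.of (fun _ _ => (1:ℝ)))
        - ((1 : ℝ)/n) • (Matrix.of (fun _ _ => (1:ℝ)) * ((1/2 : ℝ) • (A + Aᵀ)))
        + ((∑ i, ∑ j, A i j) / (n^2 : ℝ)) • Matrix.of (fun _ _ => (1:ℝ)))
    (hD : D.IsHermitian)
    (μ : Fin n → ℝ) (hμ : ∃ σ : Equiv.Perm (Fin n), μ = hD.eigenvalues ∘ σ)
    (hanti : Antitone μ) :
    IsGreatest {r : ℝ | ∃ y : Fin n → ℝ, y ≠ 0 ∧ ∑ j, y j = 0 ∧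
        r = (y ⬝ᵥ A.mulVec y) / (y ⬝ᵥ y)} (μ ⟨1, by omega⟩) ∧
      μ ⟨1, by omega⟩ < 0 := by
  obtain ⟨σ, hμσ⟩ := hμ
  have hn0 : (n : ℝ) ≠ 0 := Nat.cast_ne_zero.mpr (by omega)
  set i0 : Fin n := ⟨0, by omega⟩ with hi0def
  set i1 : Fin n := ⟨1, by omega⟩ with hi1def
  have h01 : i0 ≠ i1 := by simp [hi0def, hi1def, Fin.ext_iff]
  set J : Matrix (Fin n) (Fin n) ℝ := Matrix.of (fun _ _ => (1:ℝ)) with hJdef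
  set o : Fin n → ℝ := fun _ => (1 : ℝ) with hodef
  set v : Fin n → (Fin n → ℝ) := fun i => (hD.eigenvectorBasis (σ i) : Fin n → ℝ) with hvdef
  have hDv : ∀ i, D *ᵥ v i = μ i • v i := by
    intro i
    rw [hμσ]
    simpa using hD.mulVec_eigenvectorBasis (σ i)
  have hvv : ∀ i j, v i ⬝ᵥ v j = if i = j then 1 else 0 := by
    intro i j
    have h := orthonormal_iff_ite.mp hD.eigenvectorBasis.orthonormal (σ i) (σ j)
    simpa [PiLp.inner_apply, dotProduct, hvdef, mul_comm] using h
  -- D kills the all-ones vector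
  have hJv : ∀ y : Fin n → ℝ, J *ᵥ y = fun _ => ∑ j, y j := by
    intro y; funext k; simp [hJdef, hodef, Matrix.mulVec, dotProduct]
  have hD1 : D *ᵥ o = 0 := by
    rw [hDdef]
    funext k
    simp only [Matrix.add_mulVec, Matrix.sub_mulVec, Matrix.smul_mulVec,
      ← Matrix.mulVec_mulVec, hJv, Pi.add_apply, Pi.sub_apply, Pi.smul_apply,
      smul_eq_mul, Pi.zero_apply]
    have hsum1 : ∑ j : Fin n, o j = (n : ℝ) := by simp [hodef]
    have hAv : ∀ (M : Matrix (Fin n) (Fin n) ℝ),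
        (M *ᵥ (fun _ => ((n:ℝ)))) k = (n : ℝ) * (M *ᵥ o) k := by
      intro M
      simp [Matrix.mulVec, dotProduct, Finset.sum_mul, hodef, mul_comm]
    rw [hsum1]
    simp only [hAv]
    have hrow : ∑ x : Fin n, (1/2 : ℝ) * ((A *ᵥ o) x + (Aᵀ *ᵥ o) x) = ∑ i, ∑ j, A i j := by
      simp only [Matrix.mulVec, dotProduct, hodef, mul_one, Matrix.transpose_apply]
      rw [← Finset.mul_sum, Finset.sum_add_distrib,
        Finset.sum_comm (f := fun x j => A j x)]
      ring
    rw [hrow]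
    field_simp
    ring
  have hone : o ≠ 0 := by
    intro h
    have := congrFun h i0
    simp [hodef] at this
  have hAT : ∀ y : Fin n → ℝ, y ⬝ᵥ Aᵀ *ᵥ y = y ⬝ᵥ A *ᵥ y := by
    intro y
    rw [Matrix.dotProduct_mulVec, Matrix.vecMul_transpose, dotProduct_comm]
  have hyDy : ∀ y : Fin n → ℝ, ∑ j, y j = 0 → y ⬝ᵥ D *ᵥ y = y ⬝ᵥ A *ᵥ y := by
    intro y hy
    have hJy : J *ᵥ y = 0 := by
      rw [hJv]; funext k; simp [hy]
    have hyc : ∀ t : ℝ, y ⬝ᵥ (fun _ => t) = 0 := by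
      intro t; simp [dotProduct, ← Finset.sum_mul, hy]
    rw [hDdef]
    simp only [Matrix.add_mulVec, Matrix.sub_mulVec, Matrix.smul_mulVec,
      ← Matrix.mulVec_mulVec, hJy, Matrix.mulVec_zero, smul_zero, hJv]
    simp only [dotProduct_add, dotProduct_sub, dotProduct_smul,
      dotProduct_zero, hyc, smul_eq_mul, mul_zero, sub_zero, add_zero]
    rw [hAT]
    ring
  have hsym : ∀ x w : Fin n → ℝ, x ⬝ᵥ D *ᵥ w = (D *ᵥ x) ⬝ᵥ w := by
    have hDT : Dᵀ = D := by
      ext i j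
      simpa using congrFun (congrFun hD.eq i) j
    intro x w
    rw [Matrix.dotProduct_mulVec, ← hDT, Matrix.vecMul_transpose, hDT]
  -- general quadratic form expansion in eigencoordinates
  have key : ∀ c : Fin n → ℝ,
      ((∑ i, c i • v i) ⬝ᵥ D *ᵥ (∑ i, c i • v i) = ∑ i, μ i * c i ^ 2)
      ∧ ((∑ i, c i • v i) ⬝ᵥ (∑ i, c i • v i) = ∑ i, c i ^ 2) := by
    intro c
    have hmv : D *ᵥ (∑ i, c i • v i) = ∑ i, (c i * μ i) • v i := by
      rw [mvSum]
      refine Finset.sum_congr rfl fun i _ => ?_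
      rw [Matrix.mulVec_smul, hDv i, smul_smul]
    constructor
    · rw [hmv, dpSumLeft]
      rw [Finset.sum_congr rfl fun i _ => dpSumRight Finset.univ (c i • v i)
        (fun j => (c j * μ j) • v j)]
      simp only [smul_dotProduct, dotProduct_smul, hvv, smul_eq_mul,
        mul_ite, mul_one, mul_zero, Finset.sum_ite_eq, Finset.mem_univ, if_true]
      exact Finset.sum_congr rfl fun i _ => by ring
    · rw [dpSumLeft]
      rw [Finset.sum_congr rfl fun i _ => dpSumRight Finset.univ (c i • v i)
        (fun j => c j • v j)]
      simp only [smul_dotProduct, dotProduct_smul, hvv, smul_eq_mul,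
        mul_ite, mul_one, mul_zero, Finset.sum_ite_eq, Finset.mem_univ, if_true]
      exact Finset.sum_congr rfl fun i _ => by ring
  -- second eigenvalue is negative
  have hμ1neg : μ i1 < 0 := by
    by_contra hpos
    push_neg at hpos
    have hμ0 : 0 ≤ μ i0 :=
      le_trans hpos (hanti (by rw [hi0def, hi1def]; simp [Fin.mk_le_mk]))
    set s0 : ℝ := ∑ j, v i0 j with hs0
    set s1 : ℝ := ∑ j, v i1 j with hs1
    obtain ⟨a, b, hab0, habs⟩ : ∃ a b : ℝ, ¬(a = 0 ∧ b = 0) ∧ a * s0 + b * s1 = 0 := by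
      by_cases h : s0 = 0
      · exact ⟨1, 0, by simp, by simp [h]⟩
      · exact ⟨s1, -s0, fun hc => h (by simpa using neg_eq_zero.mp hc.2), by ring⟩
    set y : Fin n → ℝ := a • v i0 + b • v i1 with hydef
    have hpairD : y ⬝ᵥ D *ᵥ y = a ^ 2 * μ i0 + b ^ 2 * μ i1 := by
      simp only [hydef, Matrix.mulVec_add, Matrix.mulVec_smul, hDv,
        dotProduct_add, add_dotProduct, dotProduct_smul,
        smul_dotProduct, hvv, h01, h01.symm, if_false, eq_self_iff_true, if_true,
        smul_eq_mul, mul_zero, mul_one]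
      ring
    have hpairI : y ⬝ᵥ y = a ^ 2 + b ^ 2 := by
      simp only [hydef, dotProduct_add, add_dotProduct,
        dotProduct_smul, smul_dotProduct, hvv, h01, h01.symm, if_false,
        eq_self_iff_true, if_true, smul_eq_mul, mul_zero, mul_one]
      ring
    have hpairS : ∑ j, y j = a * s0 + b * s1 := by
      simp [hydef, Finset.sum_add_distrib, Finset.mul_sum, hs0, hs1]
    have hyne : y ≠ 0 := by
      intro h
      have h2 : y ⬝ᵥ y = 0 := by rw [h]; simp
      rw [hpairI] at h2
      have ha : a = 0 := by nlinarith [sq_nonneg a, sq_nonneg b]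
      have hb : b = 0 := by nlinarith [sq_nonneg a, sq_nonneg b]
      exact hab0 ⟨ha, hb⟩
    have hlt := hA y hyne (by rw [hpairS]; exact habs)
    rw [show (A.mulVec y) = A *ᵥ y from rfl] at hlt
    rw [← hyDy y (by rw [hpairS]; exact habs), hpairD] at hlt
    nlinarith [sq_nonneg a, sq_nonneg b]
  -- some eigenvalue is zero
  have hzero : ∃ i, μ i = 0 := by
    have hdet : D.det = 0 := (Matrix.exists_mulVec_eq_zero_iff).mp ⟨o, hone, hD1⟩
    have hprod : ∏ i, μ i = 0 := by
      rw [hμσ]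
      rw [show ∏ i, (hD.eigenvalues ∘ σ) i = ∏ i, hD.eigenvalues i from
        Equiv.prod_comp σ hD.eigenvalues]
      have hh := hD.det_eq_prod_eigenvalues
      rw [hdet] at hh
      exact_mod_cast hh.symm
    obtain ⟨i, -, hi⟩ := Finset.prod_eq_zero_iff.mp hprod
    exact ⟨i, hi⟩
  have hμle : ∀ i, i ≠ i0 → μ i ≤ μ i1 := by
    intro i hi
    apply hanti
    rw [Fin.le_def]
    have h0 : (i : ℕ) ≠ 0 := by
      intro h; exact hi (by rw [hi0def]; exact Fin.ext h)
    rw [hi1def]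
    simpa using by omega
  have hμ0 : μ i0 = 0 := by
    obtain ⟨i, hi⟩ := hzero
    rcases eq_or_ne i i0 with h | h
    · rwa [h] at hi
    · have := (hμle i h).trans_lt hμ1neg
      rw [hi] at this
      exact absurd this (lt_irrefl 0)
  -- the eigenvector v i0 is proportional to the all-ones vector
  have hs0dp : ∀ y : Fin n → ℝ, ∑ j, y j = 0 → v i0 ⬝ᵥ y = 0 := by
    set c : ℝ := (∑ j, v i0 j) / n with hcdef
    set z : Fin n → ℝ := v i0 - c • o with hzdef
    have hzs : ∑ j, z j = 0 := by
      simp only [hzdef, Pi.sub_apply, Pi.smul_apply, hodef, smul_eq_mul, mul_one,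
        Finset.sum_sub_distrib, Finset.sum_const, Finset.card_univ, Fintype.card_fin,
        nsmul_eq_mul, hcdef]
      field_simp
      ring
    have hDz : D *ᵥ z = 0 := by
      rw [hzdef, Matrix.mulVec_sub, Matrix.mulVec_smul, hDv i0, hD1, hμ0]
      simp
    have hz0 : z = 0 := by
      by_contra hz
      have h1 := hA z hz hzs
      rw [show (A.mulVec z) = A *ᵥ z from rfl, ← hyDy z hzs] at h1
      rw [hDz] at h1
      simp at h1
    have hvi0 : v i0 = c • o := by
      have := sub_eq_zero.mp (hzdef ▸ hz0)
      exact this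
    intro y hy
    rw [hvi0, smul_dotProduct]
    have : o ⬝ᵥ y = 0 := by simpa [dotProduct, hodef] using hy
    rw [this]
    simp
  -- the second eigenvector has zero coordinate-sum
  have hsum1 : ∑ j, v i1 j = 0 := by
    have h := hsym o (v i1)
    rw [hD1, zero_dotProduct, hDv i1] at h
    have h2 : μ i1 * ∑ j, v i1 j = 0 := by
      simpa [dotProduct_smul, dotProduct, hodef, Finset.mul_sum] using h
    rcases mul_eq_zero.mp h2 with h' | h'
    · exact absurd h' (ne_of_lt hμ1neg)
    · exact h'
  have hv1dd : v i1 ⬝ᵥ v i1 = 1 := by simpa using hvv i1 i1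
  have hv1ne : v i1 ≠ 0 := by
    intro h
    rw [h] at hv1dd
    simp at hv1dd
  refine ⟨⟨⟨v i1, hv1ne, hsum1, ?_⟩, ?_⟩, hμ1neg⟩
  · rw [show (A.mulVec (v i1)) = A *ᵥ (v i1) from rfl, ← hyDy (v i1) hsum1,
      hDv i1, dotProduct_smul, hv1dd]
    simp
  · rintro r ⟨y, hyne, hys, rfl⟩
    set c : Fin n → ℝ := fun i => v i ⬝ᵥ y with hcdef
    have hyexp : y = ∑ i, c i • v i := by
      have h := hD.eigenvectorBasis.sum_repr' (WithLp.toLp 2 y)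
      rw [← Equiv.sum_comp σ] at h
      have h2 : (∑ i, (inner ℝ (hD.eigenvectorBasis (σ i)) (WithLp.toLp 2 y) : ℝ) • (hD.eigenvectorBasis (σ i)).ofLp) = y := by
          simpa using congrArg WithLp.ofLp h
      funext k
      have hk := congrFun h2.symm k
      simpa [PiLp.inner_apply, dotProduct, Finset.sum_apply, hcdef, hvdef, mul_comm] using hk
    obtain ⟨kD, kI⟩ := key c
    have hyy : 0 < y ⬝ᵥ y := by
      rcases Function.ne_iff.mp hyne with ⟨k, hk⟩
      simp only [Pi.zero_apply] at hk
      exact Finset.sum_pos' (fun i _ => mul_self_nonneg _)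
        ⟨k, Finset.mem_univ k, mul_self_pos.mpr hk⟩
    have hc0 : c i0 = 0 := hs0dp y hys
    have hDle : y ⬝ᵥ D *ᵥ y ≤ μ i1 * (y ⬝ᵥ y) :=
      calc y ⬝ᵥ D *ᵥ y = ∑ i, μ i * c i ^ 2 := by rw [hyexp]; exact kD
        _ ≤ ∑ i, μ i1 * c i ^ 2 := Finset.sum_le_sum fun i _ => by
            rcases eq_or_ne i i0 with h | h
            · simp [h, hc0]
            · exact mul_le_mul_of_nonneg_right (hμle i h) (sq_nonneg _)
        _ = μ i1 * ∑ i, c i ^ 2 := (Finset.mul_sum _ _ _).symm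
        _ = μ i1 * (y ⬝ᵥ y) := by
            rw [show y ⬝ᵥ y = ∑ i, c i ^ 2 from by rw [hyexp]; exact kI]
    rw [div_le_iff₀ hyy, show (A.mulVec y) = A *ᵥ y from rfl, ← hyDy y hys]
    exact hDle
end

section
/- Let A be an n×n real matrix that is conditionally negative definite (yᵀAy < 0 for all nonzero y with coordinates summing to 0). If p and q are both Nash equilibria of the symmetric game with payoff matrix A (i.e., pᵀAp ≥ qᵀAp and qᵀAq ≥ pᵀAq with p, q in the probability simplex), then p = q. -/
/-! Adding the two equilibrium inequalities gives `(p - q)ᵀ A (p - q) ≥ 0`, while `p - q` has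
coordinate sum zero, so conditional negative definiteness forces `p - q = 0`. -/

open Matrix

theorem sub_dotProduct_mulVec_sub {ι R : Type*} [Fintype ι] [Ring R] (A : Matrix ι ι R)
    (p q : ι → R) :
    (p - q) ⬝ᵥ A *ᵥ (p - q) = (p ⬝ᵥ A *ᵥ p - q ⬝ᵥ A *ᵥ p) - (p ⬝ᵥ A *ᵥ q - q ⬝ᵥ A *ᵥ q) := by
  rw [mulVec_sub, dotProduct_sub, sub_dotProduct, sub_dotProduct]

theorem stmt_6 {n : ℕ} (A : Matrix (Fin n) (Fin n) ℝ)
    (hA : ∀ y : Fin n → ℝ, y ≠ 0 → ∑ j, y j = 0 → y ⬝ᵥ A.mulVec y < 0)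
    (p q : Fin n → ℝ)
    (hp0 : ∀ j, 0 ≤ p j) (hp1 : ∑ j, p j = 1)
    (hq0 : ∀ j, 0 ≤ q j) (hq1 : ∑ j, q j = 1)
    (hpNash : ∀ r : Fin n → ℝ, (∀ j, 0 ≤ r j) → ∑ j, r j = 1 →
      r ⬝ᵥ A.mulVec p ≤ p ⬝ᵥ A.mulVec p)
    (hqNash : ∀ r : Fin n → ℝ, (∀ j, 0 ≤ r j) → ∑ j, r j = 1 →
      r ⬝ᵥ A.mulVec q ≤ q ⬝ᵥ A.mulVec q) :
    p = q := by
  by_contra hne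
  have hsum : ∑ j, (p - q) j = 0 := by
    simp only [Pi.sub_apply, Finset.sum_sub_distrib, hp1, hq1, sub_self]
  have hneg := hA (p - q) (sub_ne_zero_of_ne hne) hsum
  rw [sub_dotProduct_mulVec_sub] at hneg
  linarith [hpNash q hq0 hq1, hqNash p hp0 hp1]
end

section
/- Let B = (b_{jk}), j,k = 0,…,n, be given by b_{jk} = v_k - c_k if j > k, b_{jk} = v_k/2 - c_k - ρ_k if j = k, and b_{jk} = -c_j if j < k, where 0 ≤ c₀ < c₁ < ⋯ < cₙ, v₀ ≥ v₁ ≥ ⋯ ≥ vₙ > 0, and 0 ≤ ρ_k < v_k/2. Then B is conditionally negative definite: yᵀBy < 0 for all nonzero y ∈ ℝⁿ⁺¹ with coordinates summing to 0. -/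
open Matrix

theorem stmt_7 {n : ℕ} (c v ρ : Fin (n+1) → ℝ)
    (hc0 : 0 ≤ c 0) (hc : StrictMono c) (hv : Antitone v) (hvn : 0 < v (Fin.last n))
    (hρ : ∀ k, 0 ≤ ρ k ∧ ρ k < v k / 2)
    (B : Matrix (Fin (n+1)) (Fin (n+1)) ℝ)
    (hB : ∀ j k, B j k =
      if (k : ℕ) < (j : ℕ) then v k - c k
      else if j = k then v k / 2 - c k - ρ k
      else - c j) :
    ∀ y : Fin (n+1) → ℝ, y ≠ 0 → ∑ j, y j = 0 → y ⬝ᵥ B.mulVec y < 0 := by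
  intro y hy hsum
  -- extended "a" function on ℕ
  set a' : ℕ → ℝ := fun i => v ⟨min i n, by omega⟩ / 2 - c ⟨min i n, by omega⟩ with ha'
  set d : ℕ → ℝ := fun i => a' (i+1) - a' i with hd
  set T : ℕ → ℝ := fun i => ∑ j : Fin (n+1), if i < (j:ℕ) then y j else 0 with hT
  have ha'j : ∀ j : Fin (n+1), a' (j:ℕ) = v j / 2 - c j := by
    intro j
    have hj : (⟨min (j:ℕ) n, by omega⟩ : Fin (n+1)) = j := by
      have := j.isLt; exact Fin.ext (by simp; omega)
    simp only [ha', hj]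
  -- Step 1: express the quadratic form as a double sum
  have hQ : y ⬝ᵥ B.mulVec y = ∑ j, ∑ k, y j * (B j k * y k) := by
    simp [dotProduct, mulVec, Finset.mul_sum]
  -- Step 2: symmetrize
  have hsym : ∑ j, ∑ k, y j * (B j k * y k)
      = ∑ j, ∑ k, y j * y k * ((B j k + B k j) / 2) := by
    have h1 : ∑ j, ∑ k, y j * (B j k * y k) = ∑ j, ∑ k, y k * (B k j * y j) := by
      rw [Finset.sum_comm]
    rw [show (∑ j, ∑ k, y j * (B j k * y k))
        = ((∑ j, ∑ k, y j * (B j k * y k)) + (∑ j, ∑ k, y j * (B j k * y k))) / 2 by ring]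
    nth_rewrite 2 [h1]
    rw [← Finset.sum_add_distrib]
    simp_rw [← Finset.sum_add_distrib]
    rw [Finset.sum_div]
    simp_rw [Finset.sum_div]
    apply Finset.sum_congr rfl; intro j _
    apply Finset.sum_congr rfl; intro k _
    ring
  -- Step 3: pointwise formula for the symmetrized matrix
  have hpt : ∀ j k : Fin (n+1), (B j k + B k j) / 2
      = a' (min (j:ℕ) (k:ℕ)) - (if j = k then ρ k else 0) := by
    intro j k
    rcases lt_trichotomy (j:ℕ) (k:ℕ) with h | h | h
    · have hjk : j ≠ k := fun e => by simp [e] at h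
      have hkj : k ≠ j := fun e => by simp [e] at h
      rw [hB j k, hB k j, if_neg (by omega), if_neg hjk, if_pos h, if_neg hjk,
        min_eq_left h.le, ha'j]
      ring
    · have hjk : j = k := Fin.ext h
      subst hjk
      rw [hB j j, if_neg (by omega), if_pos rfl, min_self, ha'j, if_pos rfl]
      ring
    · have hjk : j ≠ k := fun e => by simp [e] at h
      have hkj : k ≠ j := fun e => by simp [e] at h
      rw [hB j k, hB k j, if_pos h, if_neg (by omega), if_neg hkj, if_neg hjk,
        min_eq_right h.le, ha'j]
      ring
  -- Step 4: split into the "a" part and the ρ part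
  have hsplit : ∑ j, ∑ k, y j * y k * ((B j k + B k j) / 2)
      = (∑ j, ∑ k, y j * y k * a' (min (j:ℕ) (k:ℕ))) - ∑ j, ρ j * y j ^ 2 := by
    simp_rw [hpt, mul_sub, Finset.sum_sub_distrib]
    congr 1
    apply Finset.sum_congr rfl; intro j _
    rw [Finset.sum_eq_single j]
    · simp; ring
    · intro b _ hb; rw [if_neg (Ne.symm hb), mul_zero]
    · intro h; exact absurd (Finset.mem_univ j) h
  -- Step 5: telescoping of a'
  have htel : ∀ m : ℕ, m ≤ n + 1 →
      a' m = a' 0 + ∑ i ∈ Finset.range (n+1), (if i < m then d i else 0) := by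
    intro m hm
    have h1 : ∑ i ∈ Finset.range (n+1), (if i < m then d i else 0)
        = ∑ i ∈ Finset.range m, d i := by
      rw [← Finset.sum_filter]
      congr 1
      ext i
      simp only [Finset.mem_filter, Finset.mem_range]
      omega
    rw [h1, hd]
    rw [Finset.sum_range_sub (fun i => a' i)]
    ring
  -- Step 6: the min-sum identity
  have hmin : ∑ j : Fin (n+1), ∑ k : Fin (n+1), y j * y k * a' (min (j:ℕ) (k:ℕ))
      = ∑ i ∈ Finset.range (n+1), d i * (T i) ^ 2 := by
    have hcell : ∀ j k : Fin (n+1), y j * y k * a' (min (j:ℕ) (k:ℕ))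
        = y j * y k * a' 0
          + ∑ i ∈ Finset.range (n+1), d i *
              ((if i < (j:ℕ) then y j else 0) * (if i < (k:ℕ) then y k else 0)) := by
      intro j k
      have hjk : min (j:ℕ) (k:ℕ) ≤ n + 1 := by
        have := j.isLt; omega
      rw [htel _ hjk, mul_add, Finset.mul_sum]
      congr 1
      apply Finset.sum_congr rfl; intro i _
      rcases lt_or_ge i (j:ℕ) with hj2 | hj2 <;> rcases lt_or_ge i (k:ℕ) with hk2 | hk2
      · rw [if_pos (by omega : i < min (j:ℕ) (k:ℕ)), if_pos hj2, if_pos hk2]; ring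
      · rw [if_neg (by omega : ¬ i < min (j:ℕ) (k:ℕ)), if_pos hj2, if_neg (by omega)]; ring
      · rw [if_neg (by omega : ¬ i < min (j:ℕ) (k:ℕ)), if_neg (by omega), if_pos hk2]; ring
      · rw [if_neg (by omega : ¬ i < min (j:ℕ) (k:ℕ)), if_neg (by omega), if_neg (by omega)]; ring
    simp_rw [hcell, Finset.sum_add_distrib]
    have hz : ∑ j : Fin (n+1), ∑ k : Fin (n+1), y j * y k * a' 0 = 0 := by
      simp_rw [show ∀ j k : Fin (n+1), y j * y k * a' 0 = y j * (y k * a' 0) from fun _ _ => by ring,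
        ← Finset.mul_sum, ← Finset.sum_mul, hsum]
      simp
    rw [hz, zero_add]
    have e1 : ∀ j : Fin (n+1), (∑ k : Fin (n+1), ∑ i ∈ Finset.range (n+1),
        d i * ((if i < (j:ℕ) then y j else 0) * (if i < (k:ℕ) then y k else 0)))
        = ∑ i ∈ Finset.range (n+1), ∑ k : Fin (n+1),
        d i * ((if i < (j:ℕ) then y j else 0) * (if i < (k:ℕ) then y k else 0)) :=
      fun j => Finset.sum_comm
    simp_rw [e1]
    rw [Finset.sum_comm]
    apply Finset.sum_congr rfl
    intro i _
    simp_rw [← Finset.mul_sum]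
    simp only [hT]
    rw [pow_two, ← Finset.sum_mul]
  -- Assemble the formula
  have hform : y ⬝ᵥ B.mulVec y
      = (∑ i ∈ Finset.range (n+1), d i * (T i) ^ 2) - ∑ j, ρ j * y j ^ 2 := by
    rw [hQ, hsym, hsplit, hmin]
  -- properties of d and T
  have hdlt : ∀ i < n, d i < 0 := by
    intro i hi
    have h1 : (⟨min (i+1) n, by omega⟩ : Fin (n+1)) = ⟨i+1, by omega⟩ := Fin.ext (by simp; omega)
    have h2 : (⟨min i n, by omega⟩ : Fin (n+1)) = ⟨i, by omega⟩ := Fin.ext (by simp; omega)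
    have hcc : c ⟨i, by omega⟩ < c ⟨i+1, by omega⟩ := hc (by simp [Fin.lt_def])
    have hvv : v ⟨i+1, by omega⟩ ≤ v ⟨i, by omega⟩ := hv (by simp [Fin.le_def])
    simp only [hd, ha', h1, h2]
    nlinarith
  have hdn : d n = 0 := by
    have h1 : (⟨min (n+1) n, by omega⟩ : Fin (n+1)) = ⟨n, by omega⟩ := Fin.ext (by simp)
    have h2 : (⟨min n n, by omega⟩ : Fin (n+1)) = ⟨n, by omega⟩ := Fin.ext (by simp)
    simp only [hd, ha', h1, h2]
    ring
  have hTn : T n = 0 := by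
    rw [hT]
    apply Finset.sum_eq_zero
    intro j _
    rw [if_neg (by have := j.isLt; omega)]
  -- auxiliary tail sums U
  set U : ℕ → ℝ := fun m => ∑ j : Fin (n+1), if m ≤ (j:ℕ) then y j else 0 with hU
  have hUT : ∀ m, U (m+1) = T m := by
    intro m
    apply Finset.sum_congr rfl
    intro j _
    exact if_congr (by omega) rfl rfl
  have hU0 : U 0 = 0 := by
    rw [hU]; simpa using hsum
  have hdiff : ∀ (m : ℕ) (hm : m < n+1), U m - U (m+1) = y ⟨m, hm⟩ := by
    intro m hm
    rw [hU, ← Finset.sum_sub_distrib]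
    rw [Finset.sum_eq_single (⟨m, hm⟩ : Fin (n+1))]
    · simp
    · intro b _ hb
      have hbm : (b:ℕ) ≠ m := fun e => hb (Fin.ext e)
      by_cases h : m ≤ (b:ℕ)
      · rw [if_pos h, if_pos (by omega)]; ring
      · rw [if_neg h, if_neg (by omega)]; ring
    · intro h; exact absurd (Finset.mem_univ _) h
  -- existence of a nonzero tail sum below n
  have hex : ∃ i, i < n ∧ T i ≠ 0 := by
    by_contra hcon
    push_neg at hcon
    apply hy
    have hUzero : ∀ m, m ≤ n + 1 → U m = 0 := by
      intro m hm
      match m with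
      | 0 => exact hU0
      | Nat.succ m =>
        rw [hUT]
        rcases Nat.lt_or_ge m n with h | h
        · exact hcon m h
        · have : m = n := by omega
          rw [this]; exact hTn
    funext j
    have h1 : U (j:ℕ) = 0 := hUzero _ (by have := j.isLt; omega)
    have h2 : U ((j:ℕ)+1) = 0 := hUzero _ (by have := j.isLt; omega)
    have := hdiff (j:ℕ) j.isLt
    simp only [Fin.eta] at this
    rw [h1, h2] at this
    simpa using this.symm
  obtain ⟨i0, hi0n, hi0⟩ := hex
  -- conclude
  rw [hform]
  have hS : ∑ i ∈ Finset.range (n+1), d i * (T i) ^ 2 < 0 := by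
    have := Finset.sum_lt_sum (f := fun i => d i * (T i) ^ 2) (g := fun _ => (0:ℝ))
      (s := Finset.range (n+1))
      (by
        intro i hi
        rw [Finset.mem_range] at hi
        rcases Nat.lt_or_ge i n with h | h
        · have := hdlt i h
          nlinarith [sq_nonneg (T i)]
        · have : i = n := by omega
          rw [this, hdn]; simp)
      ⟨i0, Finset.mem_range.2 (by omega), by
        have := hdlt i0 hi0n
        have h2 : (0:ℝ) < (T i0)^2 := by positivity
        nlinarith⟩
    simpa using this
  have hρs : 0 ≤ ∑ j, ρ j * y j ^ 2 := by
    apply Finset.sum_nonneg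
    intro j _
    have := (hρ j).1
    positivity
  linarith
end

section
/- Let B = (b_{jk}), j,k = 0,…,n, be the war-of-attrition matrix with b_{jk} = v_k - c_k for j > k, b_{jk} = v_k/2 - c_k - ρ_k for j = k, and b_{jk} = -c_j for j < k, where 0 ≤ c₀ < ⋯ < cₙ, v₀ ≥ ⋯ ≥ vₙ > 0, 0 ≤ ρ_k < v_k/2. Let B⁽ⁿ⁾ be the matrix obtained from B by replacing its last column by the all-ones vector. Then det B⁽ⁿ⁾ = Π_{j=0}^{n-1} (-v_j/2 - ρ_j). -/
open Matrix

theorem stmt_11 {n : ℕ} (c v ρ : Fin (n+1) → ℝ)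
    (hc0 : 0 ≤ c 0) (hc : StrictMono c) (hv : Antitone v) (hvn : 0 < v (Fin.last n))
    (hρ : ∀ k, 0 ≤ ρ k ∧ ρ k < v k / 2)
    (B : Matrix (Fin (n+1)) (Fin (n+1)) ℝ)
    (hB : ∀ j k, B j k =
      if (k : ℕ) < (j : ℕ) then v k - c k
      else if j = k then v k / 2 - c k - ρ k
      else - c j) :
    (B.updateCol (Fin.last n) (fun _ => 1)).det =
      ∏ j : Fin n, (-(v j.castSucc) / 2 - ρ j.castSucc) := by
  set L := Fin.last n with hL
  set M := B.updateCol L (fun _ => 1) with hM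
  set N : Matrix (Fin (n+1)) (Fin (n+1)) ℝ :=
    Fin.cases (M 0) (fun i => M i.succ - M i.castSucc) with hN
  have hN0 : N 0 = M 0 := by simp [hN]
  have hNsucc : ∀ i : Fin n, N i.succ = M i.succ - M i.castSucc := by
    intro i; simp [hN]
  -- row operations don't change the determinant
  have hdet : M.det = N.det := by
    apply Matrix.det_eq_of_forall_row_eq_smul_add_pred (c := fun _ => 1)
    · intro j; rw [hN0]
    · intro i j; rw [hNsucc]; simp only [Pi.sub_apply, one_mul]; ring
  have hMlast : ∀ i, M i L = 1 := by
    intro i; simp [hM, Matrix.updateCol_apply]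
  have hMne : ∀ i k, k ≠ L → M i k = B i k := by
    intro i k hk; simp [hM, Matrix.updateCol_apply, hk]
  have hcol : ∀ i : Fin n, N i.succ L = 0 := by
    intro i; rw [hNsucc]; simp [hMlast]
  rw [hdet, Matrix.det_succ_column N L]
  rw [Finset.sum_eq_single (0 : Fin (n+1))]
  · have h0 : N 0 L = 1 := by rw [hN0, hMlast]
    rw [h0, Fin.succAbove_zero, hL, Fin.succAbove_last]
    have hT : ∀ i k : Fin n, (N.submatrix Fin.succ Fin.castSucc) i k =
        B i.succ k.castSucc - B i.castSucc k.castSucc := by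
      intro i k
      simp only [Matrix.submatrix_apply]
      rw [hNsucc]
      have hk : k.castSucc ≠ L := (Fin.castSucc_lt_last k).ne
      simp [hMne _ _ hk]
    have htri : (N.submatrix Fin.succ Fin.castSucc).BlockTriangular id := by
      intro i k hik
      rw [hT]
      have hki : (k : ℕ) < (i : ℕ) := hik
      have h1 : (k.castSucc : ℕ) < (i.succ : ℕ) := by
        rw [Fin.coe_castSucc, Fin.val_succ]; omega
      have h2 : (k.castSucc : ℕ) < (i.castSucc : ℕ) := by
        rw [Fin.coe_castSucc, Fin.coe_castSucc]; omega
      rw [hB, hB, if_pos h1, if_pos h2]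
      ring
    rw [Matrix.det_of_upperTriangular htri]
    have hdiag : ∀ i : Fin n, (N.submatrix Fin.succ Fin.castSucc) i i =
        v i.castSucc / 2 + ρ i.castSucc := by
      intro i
      rw [hT]
      have h1 : (i.castSucc : ℕ) < (i.succ : ℕ) := by simp
      have h2 : ¬ (i.castSucc : ℕ) < (i.castSucc : ℕ) := lt_irrefl _
      rw [hB, hB, if_pos h1, if_neg h2, if_pos rfl]
      ring
    have : ∀ i : Fin n, -(v i.castSucc) / 2 - ρ i.castSucc =
        (-1) * (v i.castSucc / 2 + ρ i.castSucc) := by intro i; ring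
    simp only [hdiag, this, Finset.prod_mul_distrib, Finset.prod_const,
      Finset.card_univ, Fintype.card_fin]
    have he : (((0 : Fin (n+1)) : ℕ) + (L : ℕ)) = n := by simp [hL]
    rw [he]
    ring
  · intro b _ hb
    obtain ⟨i, rfl⟩ := Fin.eq_succ_of_ne_zero hb
    rw [hcol]
    ring
  · intro h; exact absurd (Finset.mem_univ _) h
end

section
/- Let B ∈ ℝ^{(n+1)×(n+1)} be given by b_{jk} = v - k for j > k, b_{jk} = v/2 - k - ρ for j = k, and b_{jk} = -j for j < k, with 0 ≤ ρ < v/2. Set γ = √(v²/4 - ρ²). Then det B = (v/2 - ρ)(-iγ)^{n-1}·{ -iγ·Uₙ(-i(2ρ+1)/(2γ)) + (v/2 + ρ)·U_{n-1}(-i(2ρ+1)/(2γ)) }, where Uₘ denotes the m-th Chebyshev polynomial of the second kind. -/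
open Matrix

private noncomputable def Useq (v ρ : ℝ) : ℕ → ℝ
  | 0 => 0
  | 1 => 1
  | (k+2) => -(2*ρ+1) * Useq v ρ (k+1) + (v^2/4 - ρ^2) * Useq v ρ k

private theorem det_aux (v ρ : ℝ) : ∀ (n : ℕ) (A : Matrix (Fin (n+1)) (Fin (n+1)) ℝ),
    (∀ j c : Fin (n+1), A j c = if (c : ℕ) < (j : ℕ) then v - (c : ℕ)
      else if j = c then v / 2 - (c : ℕ) - ρ else -(j : ℕ)) →
    A.det = (v/2 - ρ) * (Useq v ρ (n+1) + (v/2 + ρ) * Useq v ρ n)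
  | 0, A, hA => by
    rw [Matrix.det_fin_one, hA]
    simp only [Useq]
    norm_num
  | 1, A, hA => by
    have h00 : A 0 0 = v/2 - ρ := by rw [hA]; norm_num
    have h01 : A 0 1 = 0 := by rw [hA]; norm_num [Fin.ext_iff]
    have h10 : A 1 0 = v := by rw [hA]; norm_num
    have h11 : A 1 1 = v/2 - 1 - ρ := by rw [hA]; norm_num [Fin.ext_iff]
    rw [Matrix.det_fin_two, h00, h01, h10, h11]
    simp only [Useq]
    ring
  | (k+2), A, hA => by
    have hAv : ∀ j c : Fin (k+3), A j c = if (c:ℕ) < (j:ℕ) then v - (c:ℕ)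
        else if (j:ℕ) = (c:ℕ) then v/2 - (c:ℕ) - ρ else -(j:ℕ) := by
      intro j c
      rw [hA]
      simp only [Fin.ext_iff]
    obtain ⟨i1, hi1⟩ : {i : Fin (k+3) // (i:ℕ) = k+1} := ⟨⟨k+1, by omega⟩, rfl⟩
    obtain ⟨i2, hi2⟩ : {i : Fin (k+3) // (i:ℕ) = k+2} := ⟨⟨k+2, by omega⟩, rfl⟩
    have h21 : i2 ≠ i1 := by simp [Fin.ext_iff]; omega
    set M : Matrix (Fin (k+3)) (Fin (k+3)) ℝ :=
      A.updateRow i2 (A i2 + (-1:ℝ) • A i1) with hMdef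
    have hdetM : M.det = A.det := Matrix.det_updateRow_add_smul_self A h21 (-1)
    set M' : Matrix (Fin (k+3)) (Fin (k+3)) ℝ :=
      M.updateCol i2 (fun r => M r i2 + (-1:ℝ) • M r i1) with hM'def
    have hdetM' : M'.det = M.det := Matrix.det_updateCol_add_smul_self M h21 (-1)
    have hM : ∀ r c, M r c = if r = i2 then A i2 c - A i1 c else A r c := by
      intro r c
      by_cases h : r = i2 <;>
        simp [hMdef, Matrix.updateRow_apply, h, sub_eq_add_neg]
    have hM' : ∀ r c, M' r c = if c = i2 then M r i2 - M r i1 else M r c := by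
      intro r c
      by_cases h : c = i2 <;>
        simp [hM'def, Matrix.updateCol_apply, h, sub_eq_add_neg]
    have hri1' : ((i1:ℕ) : ℝ) = (k:ℝ)+1 := by rw [hi1]; push_cast; ring
    have hri2' : ((i2:ℕ) : ℝ) = (k:ℝ)+2 := by rw [hi2]; push_cast; ring
    have hrow0 : ∀ c : Fin (k+3), (c:ℕ) ≤ k → M' i2 c = 0 := by
      intro c hc
      have hc2 : c ≠ i2 := by simp [Fin.ext_iff]; omega
      rw [hM', if_neg hc2, hM, if_pos rfl, hAv, hAv]
      rw [if_pos (by omega), if_pos (by omega)]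
      ring
    have hri1 : M' i2 i1 = v/2 + ρ := by
      rw [hM', if_neg (Ne.symm h21), hM, if_pos rfl, hAv, hAv]
      rw [if_pos (by omega), if_neg (by omega), if_pos (by omega)]
      rw [hri1']
      ring
    have hri2 : M' i2 i2 = -(2*ρ+1) := by
      rw [hM', if_pos rfl, hM, hM, if_pos rfl, if_pos rfl, hAv, hAv, hAv, hAv]
      rw [if_neg (by omega), if_pos (by omega), if_neg (by omega), if_neg (by omega),
        if_pos (by omega), if_neg (by omega), if_pos (by omega)]
      rw [hri1', hri2']
      ring
    have htop : ∀ p q : Fin (k+2), M' p.castSucc q.castSucc =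
        (if (q:ℕ) < (p:ℕ) then v - (q:ℕ)
          else if p = q then v/2 - (q:ℕ) - ρ else -(p:ℕ)) := by
      intro p q
      have hq2 : q.castSucc ≠ i2 := by simp [Fin.ext_iff]; omega
      have hp2 : p.castSucc ≠ i2 := by simp [Fin.ext_iff]; omega
      rw [hM', if_neg hq2, hM, if_neg hp2, hAv]
      simp only [Fin.coe_castSucc, Fin.ext_iff]
    have hcol : ∀ p : Fin (k+2), M' p.castSucc i2 =
        if (p:ℕ) = k+1 then ρ - v/2 else 0 := by
      intro p
      have hp2 : p.castSucc ≠ i2 := by simp [Fin.ext_iff]; omega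
      have hpb : (p:ℕ) < k+2 := p.isLt
      rw [hM', if_pos rfl, hM, if_neg hp2, hM, if_neg hp2, hAv, hAv]
      simp only [Fin.coe_castSucc]
      rw [if_neg (by omega), if_neg (by omega), if_neg (by omega)]
      by_cases hp : (p:ℕ) = k+1
      · rw [if_pos (by omega), if_pos hp, hri1']
        have : ((p:ℕ) : ℝ) = (k:ℝ)+1 := by rw [hp]; push_cast; ring
        rw [this]; ring
      · rw [if_neg (by omega), if_neg hp]
        ring
    -- succAbove facts
    have hcs : i2.succAbove = Fin.castSucc := by
      have h2 : i2 = Fin.last (k+2) := by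
        apply Fin.ext; rw [hi2]; rfl
      rw [h2, Fin.succAbove_last]
    have hsa1 : ∀ q : Fin (k+2), (q:ℕ) < k+1 → i1.succAbove q = q.castSucc := by
      intro q hq
      apply Fin.succAbove_of_castSucc_lt
      rw [Fin.lt_def]
      simpa [hi1] using hq
    have hsa2 : i1.succAbove (Fin.last (k+1)) = i2 := by
      rw [Fin.succAbove_of_le_castSucc]
      · apply Fin.ext
        simp [hi2]
      · rw [Fin.le_def]
        simp [hi1]
    -- determinant of the big principal minor
    have hminor2 : (M'.submatrix i2.succAbove i2.succAbove).det
        = (v/2-ρ) * (Useq v ρ (k+2) + (v/2+ρ) * Useq v ρ (k+1)) := by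
      rw [hcs]
      exact det_aux v ρ (k+1) _
        (fun p q => by rw [Matrix.submatrix_apply]; exact htop p q)
    -- determinant of the mixed minor
    have hminor1 : (M'.submatrix i2.succAbove i1.succAbove).det
        = (ρ - v/2) * ((v/2-ρ) * (Useq v ρ (k+1) + (v/2+ρ) * Useq v ρ k)) := by
      set S : Matrix (Fin (k+2)) (Fin (k+2)) ℝ :=
        M'.submatrix i2.succAbove i1.succAbove with hSdef
      have hScol : ∀ p : Fin (k+2), S p (Fin.last (k+1)) =
          if (p:ℕ) = k+1 then ρ - v/2 else 0 := by
        intro p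
        rw [hSdef, Matrix.submatrix_apply, hcs, hsa2, hcol]
      rw [Matrix.det_succ_column S (Fin.last (k+1))]
      rw [Finset.sum_eq_single (Fin.last (k+1))]
      · have hsign : (-1:ℝ) ^ ((Fin.last (k+1) : ℕ) + (Fin.last (k+1) : ℕ)) = 1 :=
          Even.neg_one_pow ⟨k+1, rfl⟩
        rw [hsign, hScol, if_pos (by simp), one_mul]
        congr 1
        have hinner : ((S.submatrix (Fin.last (k+1)).succAbove
            (Fin.last (k+1)).succAbove) : Matrix (Fin (k+1)) (Fin (k+1)) ℝ).det
            = (v/2-ρ) * (Useq v ρ (k+2-1) + (v/2+ρ) * Useq v ρ k) := by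
          rw [Fin.succAbove_last]
          refine det_aux v ρ k _ (fun r s => ?_)
          rw [Matrix.submatrix_apply, hSdef, Matrix.submatrix_apply, hcs,
            hsa1 _ (by have := s.isLt; simp; omega)]
          rw [htop]
          simp only [Fin.coe_castSucc, Fin.castSucc_inj]
        simpa using hinner
      · intro p _ hp
        have : (p:ℕ) ≠ k+1 := by
          intro h
          exact hp (Fin.ext (by simpa using h))
        rw [hScol, if_neg this]
        ring
      · intro h
        exact absurd (Finset.mem_univ _) h
    -- Laplace expansion along row i2
    rw [← hdetM, ← hdetM', Matrix.det_succ_row M' i2]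
    have hzero : ∀ j ∈ (Finset.univ : Finset (Fin (k+3))),
        j ∉ ({i1, i2} : Finset (Fin (k+3))) →
        (-1:ℝ) ^ ((i2:ℕ) + (j:ℕ)) * M' i2 j *
          (M'.submatrix i2.succAbove j.succAbove).det = 0 := by
      intro j _ hj
      simp only [Finset.mem_insert, Finset.mem_singleton] at hj
      push_neg at hj
      have hj1 : (j:ℕ) ≠ k+1 := fun h => hj.1 (Fin.ext (by omega))
      have hj2 : (j:ℕ) ≠ k+2 := fun h => hj.2 (Fin.ext (by omega))
      have : (j:ℕ) ≤ k := by have := j.isLt; omega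
      rw [hrow0 j this]
      ring
    rw [← Finset.sum_subset (Finset.subset_univ ({i1, i2} : Finset (Fin (k+3)))) hzero,
      Finset.sum_pair (Ne.symm h21)]
    have hsign1 : (-1:ℝ) ^ ((i2:ℕ) + (i1:ℕ)) = -1 := by
      rw [hi1, hi2]
      exact Odd.neg_one_pow ⟨k+1, by ring⟩
    have hsign2 : (-1:ℝ) ^ ((i2:ℕ) + (i2:ℕ)) = 1 := by
      rw [hi2]
      exact Even.neg_one_pow ⟨k+2, by ring⟩
    rw [hsign1, hsign2, hri1, hri2, hminor1, hminor2, one_mul]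
    have hU3 : Useq v ρ (k+2+1) = -(2*ρ+1) * Useq v ρ (k+2) + (v^2/4 - ρ^2) * Useq v ρ (k+1) := by
      show Useq v ρ ((k+1)+2) = _
      simp only [Useq]
    have hU2 : Useq v ρ (k+2) = -(2*ρ+1) * Useq v ρ (k+1) + (v^2/4 - ρ^2) * Useq v ρ k := by
      simp only [Useq]
    rw [hU3, hU2]
    ring
private theorem cheb_aux (v ρ γ : ℝ) (hγ : γ ≠ 0) (hγ2 : γ^2 = v^2/4 - ρ^2) :
    ∀ m : ℕ, (-Complex.I * (γ:ℂ))^m *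
      (Polynomial.Chebyshev.U ℂ (m:ℤ)).eval (-Complex.I * (2*(ρ:ℂ)+1) / (2*(γ:ℂ)))
      = ((Useq v ρ (m+1) : ℝ) : ℂ) := by
  have hγc : (γ:ℂ) ≠ 0 := Complex.ofReal_ne_zero.mpr hγ
  set w : ℂ := -Complex.I * (γ:ℂ) with hw
  set x : ℂ := -Complex.I * (2*(ρ:ℂ)+1) / (2*(γ:ℂ)) with hx
  have hxw : 2 * x * w = -(2*(ρ:ℂ)+1) := by
    rw [hx, hw]
    field_simp
    ring_nf
    rw [Complex.I_sq]
    ring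
  have hw2 : w^2 = -((γ:ℂ)^2) := by
    rw [hw]
    ring_nf
    rw [Complex.I_sq]
    ring
  intro m
  induction m using Nat.twoStepInduction with
  | zero =>
    simp [Polynomial.Chebyshev.U_zero, Useq]
  | one =>
    have h1 : ((1:ℕ):ℤ) = 1 := rfl
    rw [h1, Polynomial.Chebyshev.U_one]
    simp only [Polynomial.eval_mul, Polynomial.eval_ofNat, Polynomial.eval_X, pow_one]
    have : w * (2 * x) = -(2*(ρ:ℂ)+1) := by rw [← hxw]; ring
    rw [this]
    have : Useq v ρ 2 = -(2*ρ+1) := by simp only [Useq]; ring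
    rw [this]
    push_cast
    ring
  | more m ih2 ih1 =>
    have hcast : ((m+2:ℕ):ℤ) = (m:ℤ) + 2 := by push_cast; ring
    rw [hcast, Polynomial.Chebyshev.U_add_two]
    simp only [Polynomial.eval_sub, Polynomial.eval_mul, Polynomial.eval_ofNat,
      Polynomial.eval_X]
    have hcast1 : ((m+1:ℕ):ℤ) = (m:ℤ) + 1 := by push_cast; ring
    rw [hcast1] at ih1
    have key : w^(m+2) * (2 * x * (Polynomial.Chebyshev.U ℂ ((m:ℤ)+1)).eval x
        - (Polynomial.Chebyshev.U ℂ (m:ℤ)).eval x)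
        = (2*x*w) * (w^(m+1) * (Polynomial.Chebyshev.U ℂ ((m:ℤ)+1)).eval x)
          - w^2 * (w^m * (Polynomial.Chebyshev.U ℂ (m:ℤ)).eval x) := by ring
    rw [key, hxw, hw2, ih1, ih2]
    have hrec : Useq v ρ (m+3) = -(2*ρ+1) * Useq v ρ (m+2) + γ^2 * Useq v ρ (m+1) := by
      rw [hγ2]
      show Useq v ρ ((m+1)+2) = _
      simp only [Useq]
    rw [show m+2+1 = m+3 from rfl, hrec]
    push_cast
    ring

theorem stmt_12 {n : ℕ} (v ρ : ℝ) (hρ0 : 0 ≤ ρ) (hρ : ρ < v / 2)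
    (B : Matrix (Fin (n+1)) (Fin (n+1)) ℝ)
    (hB : ∀ j k : Fin (n+1), B j k =
      if (k : ℕ) < (j : ℕ) then v - (k : ℕ)
      else if j = k then v / 2 - (k : ℕ) - ρ
      else -(j : ℕ)) :
    (B.det : ℂ) = ((v / 2 - ρ : ℝ) : ℂ) *
        (-Complex.I * (Real.sqrt (v ^ 2 / 4 - ρ ^ 2) : ℂ)) ^ ((n : ℤ) - 1) *
      (-Complex.I * (Real.sqrt (v ^ 2 / 4 - ρ ^ 2) : ℂ) *
          (Polynomial.Chebyshev.U ℂ (n : ℤ)).eval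
            (-Complex.I * (2 * (ρ : ℂ) + 1) / (2 * (Real.sqrt (v ^ 2 / 4 - ρ ^ 2) : ℂ)))
        + ((v / 2 + ρ : ℝ) : ℂ) *
          (Polynomial.Chebyshev.U ℂ ((n : ℤ) - 1)).eval
            (-Complex.I * (2 * (ρ : ℂ) + 1) / (2 * (Real.sqrt (v ^ 2 / 4 - ρ ^ 2) : ℂ)))) := by
  set γ : ℝ := Real.sqrt (v ^ 2 / 4 - ρ ^ 2) with hγdef
  have hpos : (0:ℝ) < v ^ 2 / 4 - ρ ^ 2 := by nlinarith
  have hγpos : 0 < γ := Real.sqrt_pos.mpr hpos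
  have hγ : γ ≠ 0 := ne_of_gt hγpos
  have hγ2 : γ ^ 2 = v ^ 2 / 4 - ρ ^ 2 := Real.sq_sqrt hpos.le
  have hγc : (γ:ℂ) ≠ 0 := Complex.ofReal_ne_zero.mpr hγ
  have hw0 : (-Complex.I * (γ:ℂ)) ≠ 0 :=
    mul_ne_zero (neg_ne_zero.mpr Complex.I_ne_zero) hγc
  have hdet := det_aux v ρ n B hB
  rw [hdet]
  have hch := cheb_aux v ρ γ hγ hγ2
  cases n with
  | zero =>
    have h0 : ((0:ℕ):ℤ) = 0 := rfl
    rw [h0]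
    norm_num [Polynomial.Chebyshev.U_zero, Polynomial.Chebyshev.U_neg_one]
    simp only [Useq]
    have hI : (Complex.I * (γ:ℂ)) ≠ 0 := mul_ne_zero Complex.I_ne_zero hγc
    field_simp
    push_cast [Complex.I_sq]
    ring
  | succ m =>
    have h1 : ((m+1:ℕ):ℤ) - 1 = (m:ℤ) := by push_cast; ring
    rw [h1, zpow_natCast]
    have e1 := hch (m+1)
    have e0 := hch m
    have hc1 : ((m+1:ℕ):ℤ) = (m:ℤ) + 1 := by push_cast; ring
    calc ((((v / 2 - ρ) * (Useq v ρ (m + 1 + 1) + (v / 2 + ρ) * Useq v ρ (m + 1)) : ℝ)) : ℂ)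
        = ((v / 2 - ρ : ℝ) : ℂ) * (((Useq v ρ (m+2) : ℝ) : ℂ)
            + ((v / 2 + ρ : ℝ):ℂ) * ((Useq v ρ (m+1) : ℝ):ℂ)) := by push_cast; ring
      _ = _ := by
          rw [← e1, ← e0]
          push_cast
          ring
end

section
/- Consider a symmetric game with payoff matrix A = (a_{jk}), j,k = 0,…,n, where a_{jk} = v_k - c_k if j > k, a_{jk} = v_k/2 - c_k if j = k, and a_{jk} = -c_j if j < k, with 0 ≤ c₀ < c₁ < ⋯ < cₙ and v₀ ≥ v₁ ≥ ⋯ ≥ vₙ > 0. If p is an evolutionarily stable strategy of A, then pₙ > 0. -/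
open Matrix

theorem stmt_16 {n : ℕ} (c v : Fin (n+1) → ℝ)
    (hc0 : 0 ≤ c 0) (hc : StrictMono c) (hv : Antitone v) (hvn : 0 < v (Fin.last n))
    (A : Matrix (Fin (n+1)) (Fin (n+1)) ℝ)
    (hA : ∀ j k, A j k =
      if (k : ℕ) < (j : ℕ) then v k - c k
      else if j = k then v k / 2 - c k
      else - c j)
    (p : Fin (n+1) → ℝ) (hp0 : ∀ j, 0 ≤ p j) (hp1 : ∑ j, p j = 1)
    (hNash : ∀ q : Fin (n+1) → ℝ, (∀ j, 0 ≤ q j) → ∑ j, q j = 1 →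
      q ⬝ᵥ A.mulVec p ≤ p ⬝ᵥ A.mulVec p)
    (hESS : ∀ q : Fin (n+1) → ℝ, (∀ j, 0 ≤ q j) → ∑ j, q j = 1 → q ≠ p →
      q ⬝ᵥ A.mulVec p = p ⬝ᵥ A.mulVec p → q ⬝ᵥ A.mulVec q < p ⬝ᵥ A.mulVec q) :
    0 < p (Fin.last n) := by
  by_contra hpn
  have hpn0 : p (Fin.last n) = 0 := le_antisymm (not_lt.mp hpn) (hp0 _)
  set S := Finset.univ.filter (fun j => 0 < p j) with hS
  have hSne : S.Nonempty := by
    by_contra h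
    rw [Finset.not_nonempty_iff_eq_empty] at h
    have hz : ∑ j, p j = 0 := Finset.sum_eq_zero fun j _ => by
      by_contra hj
      have hmem : j ∈ S := Finset.mem_filter.2
        ⟨Finset.mem_univ _, lt_of_le_of_ne (hp0 j) (Ne.symm hj)⟩
      simp [h] at hmem
    rw [hp1] at hz; norm_num at hz
  set m := S.max' hSne with hm
  have hpm : 0 < p m := (Finset.mem_filter.1 (S.max'_mem hSne)).2
  have hmax : ∀ k, m < k → p k = 0 := by
    intro k hk
    by_contra h
    have hk' : k ∈ S := Finset.mem_filter.2
      ⟨Finset.mem_univ _, lt_of_le_of_ne (hp0 k) (Ne.symm h)⟩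
    exact absurd (S.le_max' k hk') (not_le.2 hk)
  have hmn : m < Fin.last n := by
    rcases lt_or_eq_of_le (Fin.le_last m) with h | h
    · exact h
    · rw [h] at hpm; linarith
  have hpure : ∀ j, (A.mulVec p) j ≤ p ⬝ᵥ A.mulVec p := by
    intro j
    have h := hNash (Pi.single j 1)
      (fun k => by by_cases h : k = j <;> simp [Pi.single_apply, h]) (by simp)
    simpa [dotProduct, Pi.single_apply] using h
  have heq : (A.mulVec p) m = p ⬝ᵥ A.mulVec p := by
    by_contra h
    have hlt : (A.mulVec p) m < p ⬝ᵥ A.mulVec p := lt_of_le_of_ne (hpure m) h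
    have hc1 : p ⬝ᵥ A.mulVec p < p ⬝ᵥ A.mulVec p := by
      calc p ⬝ᵥ A.mulVec p = ∑ j, p j * (A.mulVec p) j := rfl
        _ < ∑ j, p j * (p ⬝ᵥ A.mulVec p) := by
            refine Finset.sum_lt_sum
              (fun j _ => mul_le_mul_of_nonneg_left (hpure j) (hp0 j))
              ⟨m, Finset.mem_univ m, ?_⟩
            exact mul_lt_mul_of_pos_left hlt hpm
        _ = p ⬝ᵥ A.mulVec p := by rw [← Finset.sum_mul, hp1, one_mul]
    exact lt_irrefl _ hc1
  have hkey : (A.mulVec p) (Fin.last n) - (A.mulVec p) m = v m / 2 * p m := by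
    have h1 : (A.mulVec p) (Fin.last n) - (A.mulVec p) m
        = ∑ k, (A (Fin.last n) k - A m k) * p k := by
      simp [Matrix.mulVec, dotProduct, ← Finset.sum_sub_distrib, sub_mul]
    rw [h1, Finset.sum_eq_single m]
    · have hlt : (m : ℕ) < n := by exact hmn
      rw [hA, hA]
      simp [hlt, lt_irrefl]
      left; ring
    · intro k _ hk
      rcases lt_trichotomy k m with h | h | h
      · have h1 : (k : ℕ) < n := by exact lt_trans h hmn
        have h2 : (k : ℕ) < (m : ℕ) := h
        rw [hA, hA]
        simp [h1, h2]
      · exact absurd h hk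
      · rw [hmax k h]; ring
    · intro h; exact absurd (Finset.mem_univ m) h
  have hvm : 0 < v m := lt_of_lt_of_le hvn (hv (Fin.le_last m))
  have hfinal : p ⬝ᵥ A.mulVec p < (A.mulVec p) (Fin.last n) := by
    rw [← heq]
    nlinarith
  exact absurd (hpure (Fin.last n)) (not_le.2 hfinal)
end

section
/- Consider the war of attrition payoff matrix B = (b_{jk}), j,k = 0,…,n, with b_{jk} = v_k - c_k for j > k, b_{jk} = v_k/2 - c_k - ρ_k for j = k, and b_{jk} = -c_j for j < k, where 0 ≤ c₀ < ⋯ < cₙ, v₀ ≥ ⋯ ≥ vₙ > 0, 0 ≤ ρ_k < v_k/2. Let p be the ESS of B. If j < n and c_j ≥ cₙ + ρₙ - vₙ/2, then p_j = 0. -/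
/-!
Against the war-of-attrition matrix, the row of the last strategy `n` dominates the row of any
`j < n` with `c j ≥ c n + ρ n - v n / 2` entrywise, strictly in column `j`. So if `p j > 0`, the
pure strategy `n` would earn strictly more against `p` than `j` does, while `j`, being in the
support of the equilibrium `p`, already earns the equilibrium payoff, which `n` cannot exceed.
-/

open Matrix

section SymmetricNash

variable {ι : Type*} [Fintype ι]

def IsSymmetricNashEquilibrium (B : Matrix ι ι ℝ) (p : ι → ℝ) : Prop :=
  ∀ q : ι → ℝ, (∀ j, 0 ≤ q j) → ∑ j, q j = 1 → q ⬝ᵥ B *ᵥ p ≤ p ⬝ᵥ B *ᵥ p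

variable {B : Matrix ι ι ℝ} {p : ι → ℝ}

theorem mulVec_lt_mulVec_of_row_le {i j m : ι} (hp0 : ∀ k, 0 ≤ p k)
    (hle : ∀ k, B j k ≤ B i k) (hlt : B j m < B i m) (hpm : 0 < p m) :
    (B *ᵥ p) j < (B *ᵥ p) i :=
  Finset.sum_lt_sum (fun k _ => mul_le_mul_of_nonneg_right (hle k) (hp0 k))
    ⟨m, Finset.mem_univ m, mul_lt_mul_of_pos_right hlt hpm⟩

namespace IsSymmetricNashEquilibrium

theorem mulVec_le (h : IsSymmetricNashEquilibrium B p) (k : ι) :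
    (B *ᵥ p) k ≤ p ⬝ᵥ B *ᵥ p := by
  classical
  have hsingle : 0 ≤ (Pi.single k 1 : ι → ℝ) := Pi.single_nonneg.mpr zero_le_one
  simpa [single_dotProduct] using h (Pi.single k 1) hsingle (by simp)

theorem mulVec_eq_of_pos (h : IsSymmetricNashEquilibrium B p) (hp0 : ∀ k, 0 ≤ p k)
    (hp1 : ∑ k, p k = 1) {j : ι} (hpj : 0 < p j) :
    (B *ᵥ p) j = p ⬝ᵥ B *ᵥ p := by
  by_contra hne
  have hlt : (B *ᵥ p) j < p ⬝ᵥ B *ᵥ p := (h.mulVec_le j).lt_of_ne hne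
  have : p ⬝ᵥ B *ᵥ p < p ⬝ᵥ B *ᵥ p :=
    calc p ⬝ᵥ B *ᵥ p = ∑ k, p k * (B *ᵥ p) k := rfl
      _ < ∑ k, p k * (p ⬝ᵥ B *ᵥ p) :=
        Finset.sum_lt_sum (fun k _ => mul_le_mul_of_nonneg_left (h.mulVec_le k) (hp0 k))
          ⟨j, Finset.mem_univ j, mul_lt_mul_of_pos_left hlt hpj⟩
      _ = p ⬝ᵥ B *ᵥ p := by rw [← Finset.sum_mul, hp1, one_mul]
  exact lt_irrefl _ this

theorem eq_zero_of_row_le (h : IsSymmetricNashEquilibrium B p) (hp0 : ∀ k, 0 ≤ p k)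
    (hp1 : ∑ k, p k = 1) {i j : ι} (hle : ∀ k, B j k ≤ B i k) (hlt : B j j < B i j) :
    p j = 0 := by
  by_contra hpj
  have hpos : 0 < p j := (hp0 j).lt_of_ne (Ne.symm hpj)
  linarith [mulVec_lt_mulVec_of_row_le hp0 hle hlt hpos, h.mulVec_eq_of_pos hp0 hp1 hpos,
    h.mulVec_le i]

end IsSymmetricNashEquilibrium

end SymmetricNash

section WarOfAttrition

variable {n : ℕ} (c v ρ : Fin (n+1) → ℝ)

noncomputable def warOfAttrition : Matrix (Fin (n+1)) (Fin (n+1)) ℝ := fun j k =>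
  if (k : ℕ) < (j : ℕ) then v k - c k
  else if j = k then v k / 2 - c k - ρ k
  else - c j

variable {c v ρ}

theorem warOfAttrition_of_lt {j k : Fin (n+1)} (h : k < j) :
    warOfAttrition c v ρ j k = v k - c k :=
  if_pos h

theorem warOfAttrition_self (k : Fin (n+1)) :
    warOfAttrition c v ρ k k = v k / 2 - c k - ρ k := by
  simp [warOfAttrition]

theorem warOfAttrition_of_gt {j k : Fin (n+1)} (h : j < k) :
    warOfAttrition c v ρ j k = - c j := by
  simp [warOfAttrition, Fin.lt_def.mp h |>.not_gt, h.ne]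

theorem warOfAttrition_le_last_row (hc : Monotone c) (hv : Antitone v)
    (hρ : ∀ k, 0 ≤ ρ k ∧ ρ k < v k / 2) {j : Fin (n+1)} (hj : j < Fin.last n)
    (hcj : c (Fin.last n) + ρ (Fin.last n) - v (Fin.last n) / 2 ≤ c j) (k : Fin (n+1)) :
    warOfAttrition c v ρ j k ≤ warOfAttrition c v ρ (Fin.last n) k := by
  rcases lt_trichotomy k j with hkj | rfl | hjk
  · rw [warOfAttrition_of_lt hkj, warOfAttrition_of_lt (hkj.trans hj)]
  · rw [warOfAttrition_self, warOfAttrition_of_lt hj]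
    linarith [hρ k]
  · rw [warOfAttrition_of_gt hjk]
    rcases (Fin.le_last k).lt_or_eq with hk | rfl
    · rw [warOfAttrition_of_lt hk]
      linarith [hc hk.le, hv hk.le, hρ (Fin.last n)]
    · rw [warOfAttrition_self]
      linarith

theorem warOfAttrition_lt_last_row (hρ : ∀ k, 0 ≤ ρ k ∧ ρ k < v k / 2) {j : Fin (n+1)}
    (hj : j < Fin.last n) :
    warOfAttrition c v ρ j j < warOfAttrition c v ρ (Fin.last n) j := by
  rw [warOfAttrition_self, warOfAttrition_of_lt hj]
  linarith [hρ j]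

end WarOfAttrition

theorem stmt_17_general {n : ℕ} (c v ρ : Fin (n+1) → ℝ)
    (hc : StrictMono c) (hv : Antitone v)
    (hρ : ∀ k, 0 ≤ ρ k ∧ ρ k < v k / 2)
    (B : Matrix (Fin (n+1)) (Fin (n+1)) ℝ)
    (hB : ∀ j k, B j k =
      if (k : ℕ) < (j : ℕ) then v k - c k
      else if j = k then v k / 2 - c k - ρ k
      else - c j)
    (p : Fin (n+1) → ℝ) (hp0 : ∀ j, 0 ≤ p j) (hp1 : ∑ j, p j = 1)
    (hNash : ∀ q : Fin (n+1) → ℝ, (∀ j, 0 ≤ q j) → ∑ j, q j = 1 →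
      q ⬝ᵥ B.mulVec p ≤ p ⬝ᵥ B.mulVec p)
    (j : Fin (n+1)) (hj : (j : ℕ) < n)
    (hcj : c (Fin.last n) + ρ (Fin.last n) - v (Fin.last n) / 2 ≤ c j) :
    p j = 0 := by
  have hB' : B = warOfAttrition c v ρ := Matrix.ext hB
  subst hB'
  have hjl : j < Fin.last n := Fin.lt_def.mpr hj
  exact IsSymmetricNashEquilibrium.eq_zero_of_row_le hNash hp0 hp1
    (warOfAttrition_le_last_row hc.monotone hv hρ hjl hcj) (warOfAttrition_lt_last_row hρ hjl)

theorem stmt_17 {n : ℕ} (c v ρ : Fin (n+1) → ℝ)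
    (hc0 : 0 ≤ c 0) (hc : StrictMono c) (hv : Antitone v) (hvn : 0 < v (Fin.last n))
    (hρ : ∀ k, 0 ≤ ρ k ∧ ρ k < v k / 2)
    (B : Matrix (Fin (n+1)) (Fin (n+1)) ℝ)
    (hB : ∀ j k, B j k =
      if (k : ℕ) < (j : ℕ) then v k - c k
      else if j = k then v k / 2 - c k - ρ k
      else - c j)
    (p : Fin (n+1) → ℝ) (hp0 : ∀ j, 0 ≤ p j) (hp1 : ∑ j, p j = 1)
    (hNash : ∀ q : Fin (n+1) → ℝ, (∀ j, 0 ≤ q j) → ∑ j, q j = 1 →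
      q ⬝ᵥ B.mulVec p ≤ p ⬝ᵥ B.mulVec p)
    (hESS : ∀ q : Fin (n+1) → ℝ, (∀ j, 0 ≤ q j) → ∑ j, q j = 1 → q ≠ p →
      q ⬝ᵥ B.mulVec p = p ⬝ᵥ B.mulVec p → q ⬝ᵥ B.mulVec q < p ⬝ᵥ B.mulVec q)
    (j : Fin (n+1)) (hj : (j : ℕ) < n)
    (hcj : c (Fin.last n) + ρ (Fin.last n) - v (Fin.last n) / 2 ≤ c j) :
    p j = 0 :=
  stmt_17_general c v ρ hc hv hρ B hB p hp0 hp1 hNash j hj hcj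
end

section
/- Define sequences by uₖ = -(2ρ+1)u_{k-1} + γ²u_{k-2} with u₋₁ = 0, u₀ = 1, where γ² = v²/4 - ρ², 0 ≤ ρ < v/2, and tⱼ = uⱼ + (s+1-n+v/2+ρ)u_{j-1} + (s+1-n)(v/2+ρ)u_{j-2} for j ≥ 1, where s is an integer with 0 ≤ s ≤ n-1 and n-1+ρ ≤ v/2 + s < n+ρ. Then (-1)ᵏtₖ > 0 for all k ≥ 1. -/
/-! Prepending `u₋₁ = 0` to `u` gives a solution `x` of the recurrence from index `0` on, and
`t` is a fixed linear combination of three consecutive terms of `x`, hence solves the same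
recurrence `tₖ₊₂ = -(2ρ+1) tₖ₊₁ + γ² tₖ`. Multiplying by `(-1)ᵏ` turns it into a recurrence with
nonnegative coefficients, which propagates the signs `t₁ < 0 < t₂` to all `k`. -/

theorem recurrence_of_combination_of_shifts {R : Type*} [CommRing R] {a c p q : R}
    {x y : ℕ → R} (hx : ∀ k, x (k + 2) = a * x (k + 1) + c * x k)
    (hy : ∀ m, y m = x (m + 2) + p * x (m + 1) + q * x m) :
    ∀ k, y (k + 2) = a * y (k + 1) + c * y k := by
  intro k
  simp only [hy, hx (k + 2), hx (k + 1), hx k]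
  ring

theorem pos_of_recurrence_of_nonneg {R : Type*} [Semiring R] [PartialOrder R]
    [IsStrictOrderedRing R] {b c : R} {w : ℕ → R} (hb : 0 < b) (hc : 0 ≤ c)
    (hw : ∀ k, w (k + 2) = b * w (k + 1) + c * w k) (h0 : 0 < w 0) (h1 : 0 < w 1) :
    ∀ k, 0 < w k := by
  suffices ∀ k, 0 < w k ∧ 0 < w (k + 1) from fun k => (this k).1
  intro k
  induction k with
  | zero => exact ⟨h0, h1⟩
  | succ k ih =>
    refine ⟨ih.2, ?_⟩
    rw [hw]
    exact add_pos_of_pos_of_nonneg (mul_pos hb ih.2) (mul_nonneg hc ih.1.le)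

theorem neg_one_pow_succ_mul_pos_of_recurrence {R : Type*} [CommRing R] [PartialOrder R]
    [IsStrictOrderedRing R] {b c : R} {y : ℕ → R} (hb : 0 < b) (hc : 0 ≤ c)
    (hy : ∀ k, y (k + 2) = -b * y (k + 1) + c * y k) (h0 : y 0 < 0) (h1 : 0 < y 1) :
    ∀ k, 0 < (-1) ^ (k + 1) * y k := by
  refine pos_of_recurrence_of_nonneg hb hc (fun k => ?_) (by simpa using h0) (by simpa using h1)
  rw [hy, pow_succ, pow_succ]
  ring

theorem stmt_18_general (v ρ : ℝ) (hρ0 : 0 ≤ ρ) (hρ : ρ < v / 2)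
    (n s : ℕ)
    (hlow : (n : ℝ) - 1 + ρ ≤ v / 2 + s) (hhigh : v / 2 + s < (n : ℝ) + ρ)
    (u : ℕ → ℝ) (hu0 : u 0 = 1) (hu1 : u 1 = -(2 * ρ + 1))
    (hurec : ∀ k : ℕ, u (k + 2) = -(2 * ρ + 1) * u (k + 1) + (v ^ 2 / 4 - ρ ^ 2) * u k)
    (t : ℕ → ℝ)
    (ht1 : t 1 = u 1 + ((s : ℝ) + 1 - n + v / 2 + ρ) * u 0)
    (htj : ∀ j : ℕ, 2 ≤ j → t j = u j + ((s : ℝ) + 1 - n + v / 2 + ρ) * u (j - 1) +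
      ((s : ℝ) + 1 - n) * (v / 2 + ρ) * u (j - 2)) :
    ∀ k : ℕ, 1 ≤ k → 0 < (-1 : ℝ) ^ k * t k := by
  set x : ℕ → ℝ := fun k => Nat.casesOn k 0 u
  have hx0 : x 0 = 0 := rfl
  have hx1 : x 1 = u 0 := rfl
  have hx : ∀ k, x (k + 2) = -(2 * ρ + 1) * x (k + 1) + (v ^ 2 / 4 - ρ ^ 2) * x k
    | 0 => show u 1 = -(2 * ρ + 1) * u 0 + (v ^ 2 / 4 - ρ ^ 2) * 0 by rw [hu1, hu0]; ring
    | k + 1 => hurec k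
  have ht : ∀ m, t (m + 1) = x (m + 2) + ((s : ℝ) + 1 - n + v / 2 + ρ) * x (m + 1) +
      ((s : ℝ) + 1 - n) * (v / 2 + ρ) * x m
    | 0 => show t 1 = u 1 + _ * u 0 + _ * 0 by rw [ht1]; ring
    | m + 1 => htj (m + 2) (by omega)
  have hrec := recurrence_of_combination_of_shifts hx ht
  have ht1_eq : t 1 = v / 2 + s - n - ρ := by rw [ht1, hu1, hu0]; ring
  have ht2_eq : t 2 = (v / 2 + ρ) * (t 1 + 1) - (2 * ρ + 1) * t 1 := by
    simp only [ht 1, hx 1, hx 0, zero_add, hx0, hx1, hu0, ht1_eq]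
    ring
  have ht2_pos : 0 < t 2 := by
    rw [ht2_eq]
    nlinarith [mul_nonneg (by linarith : 0 ≤ v / 2 + ρ) (by linarith : 0 ≤ t 1 + 1)]
  have hγ : 0 ≤ v ^ 2 / 4 - ρ ^ 2 := by nlinarith
  intro k hk
  obtain ⟨m, rfl⟩ := Nat.exists_eq_add_of_le' hk
  exact neg_one_pow_succ_mul_pos_of_recurrence (y := fun m => t (m + 1)) (by linarith) hγ hrec
    (by linarith) ht2_pos m

theorem stmt_18 (v ρ : ℝ) (hρ0 : 0 ≤ ρ) (hρ : ρ < v / 2)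
    (n s : ℕ) (hs : s ≤ n - 1) (hn : 1 ≤ n)
    (hlow : (n : ℝ) - 1 + ρ ≤ v / 2 + s) (hhigh : v / 2 + s < (n : ℝ) + ρ)
    (u : ℕ → ℝ) (hu0 : u 0 = 1) (hu1 : u 1 = -(2 * ρ + 1))
    (hurec : ∀ k : ℕ, u (k + 2) = -(2 * ρ + 1) * u (k + 1) + (v ^ 2 / 4 - ρ ^ 2) * u k)
    (t : ℕ → ℝ)
    (ht1 : t 1 = u 1 + ((s : ℝ) + 1 - n + v / 2 + ρ) * u 0)
    (htj : ∀ j : ℕ, 2 ≤ j → t j = u j + ((s : ℝ) + 1 - n + v / 2 + ρ) * u (j - 1) +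
      ((s : ℝ) + 1 - n) * (v / 2 + ρ) * u (j - 2)) :
    ∀ k : ℕ, 1 ≤ k → 0 < (-1 : ℝ) ^ k * t k :=
  stmt_18_general v ρ hρ0 hρ n s hlow hhigh u hu0 hu1 hurec t ht1 htj
end
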